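/- For every decreasing sequence α of levels, minStep(X^k_α) ≥ step^k_α, where minStep(X) is the minimal positive difference between two distinct elements of X (infinity if X is a singleton). -/

import Mathlib

/-! Inductively, `Y^k_α` is a dyadic block `[a, a + 2^n)` with `2^n ∣ a`, where `n = l - 1` for the
last appended level `l` (and `n = k` for `α = ()`): filtering such a block by
`⌈log₂(y − a + 1)⌉ = l` leaves its dyadic sub-block `[a + 2^(l-1), a + 2^l)`. All elements of the
block share the bits above position `l - 1`, so their bit reversals share the lowest `k - l + 1`
bits, i.e. they are congruent modulo `step^k_α = 2^(k-l+1)`. -/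

/-- The `k`-bit reversal permutation of `{0,…,2^k−1}`. -/
def revBits (k x : ℕ) : ℕ := ∑ i ∈ Finset.range k, 2 ^ i * (x / 2 ^ (k - 1 - i) % 2)

/-- The sets of time slots `Y^k_α`.  A (decreasing) sequence `α = (l_0,…,l_r)` of the paper
is represented here as the list `[l_r, …, l_0]`, with the most recently appended level first:
`Y^k_{()} = {0,…,2^k−1}` and `Y^k_{α·(l)} = {y ∈ Y^k_α : ⌈log₂(y − min Y^k_α + 1)⌉ = l}`. -/
noncomputable def Y (k : ℕ) : List ℕ → Finset ℕ
  | [] => Finset.range (2 ^ k)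
  | l :: α => (Y k α).filter (fun y => Nat.clog 2 (y - sInf {z : ℕ | z ∈ Y k α} + 1) = l)

/-- Validity of the (reversed) sequence: the paper's `α` is strictly decreasing with
entries in `{0,…,k}`, i.e. the reversed list is strictly increasing with entries `≤ k`. -/
def ValidSeq (k : ℕ) (α : List ℕ) : Prop :=
  List.Pairwise (· < ·) α ∧ ∀ l ∈ α, l ≤ k

/-- The ranks `X^k_α = revBits_k(Y^k_α)`. -/
noncomputable def X (k : ℕ) (α : List ℕ) : Finset ℕ := (Y k α).image (revBits k)

/-- `step^k_{()} = 1` and `step^k_{α·(l)} = 2^{k−l+1}`. -/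
def stepA (k : ℕ) : List ℕ → ℕ
  | [] => 1
  | l :: _ => 2 ^ (k - l + 1)

theorem Nat.clog_eq_iff_of_pos {b m l : ℕ} (hb : 1 < b) (hm : 0 < m) :
    Nat.clog b m = l ↔ b ^ l / b < m ∧ m ≤ b ^ l := by
  rw [le_antisymm_iff, Nat.clog_le_iff_le_pow hb]
  cases l with
  | zero => simp [Nat.div_eq_of_lt hb, hm]
  | succ n =>
    rw [Nat.succ_le_iff, Nat.lt_clog_iff_pow_lt hb, pow_succ, Nat.mul_div_cancel _ (by omega)]
    tauto

theorem Nat.filter_clog_sub_add_one_Ico {b a c l : ℕ} (hb : 1 < b) (hc : a + b ^ l ≤ c) :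
    (Finset.Ico a c).filter (fun y => Nat.clog b (y - a + 1) = l) =
      Finset.Ico (a + b ^ l / b) (a + b ^ l) := by
  ext y
  simp only [Finset.mem_filter, Finset.mem_Ico, Nat.clog_eq_iff_of_pos hb (Nat.succ_pos _)]
  have := Nat.div_le_self (b ^ l) b
  generalize b ^ l / b = p at *
  omega

theorem Nat.div_eq_of_mem_Ico {a d y : ℕ} (hd : d ∣ a) (hy : y ∈ Finset.Ico a (a + d)) :
    y / d = a / d := by
  obtain ⟨c, rfl⟩ := hd
  rw [Finset.mem_Ico] at hy
  rcases Nat.eq_zero_or_pos d with rfl | hd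
  · simp
  rw [Nat.mul_div_cancel_left _ hd]
  exact Nat.div_eq_of_lt_le (by linarith) (by rw [Nat.succ_mul]; linarith)

theorem revBits_modEq_of_div_eq (k : ℕ) {j y₁ y₂ : ℕ} (h : y₁ / 2 ^ j = y₂ / 2 ^ j) :
    revBits k y₁ ≡ revBits k y₂ [MOD 2 ^ (k - j)] := by
  have hsplit (y : ℕ) : revBits k y =
      (∑ i ∈ Finset.range (k - j), 2 ^ i * (y / 2 ^ (k - 1 - i) % 2)) +
      ∑ i ∈ Finset.Ico (k - j) k, 2 ^ i * (y / 2 ^ (k - 1 - i) % 2) :=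
    (Finset.sum_range_add_sum_Ico _ (Nat.sub_le k j)).symm
  have hlow : ∀ i ∈ Finset.range (k - j), y₁ / 2 ^ (k - 1 - i) = y₂ / 2 ^ (k - 1 - i) := by
    intro i hi
    have hij : k - 1 - i = j + (k - 1 - i - j) := by
      rw [Finset.mem_range] at hi
      omega
    rw [hij, pow_add, ← Nat.div_div_eq_div_mul, ← Nat.div_div_eq_div_mul, h]
  have hhigh (y : ℕ) : 2 ^ (k - j) ∣ ∑ i ∈ Finset.Ico (k - j) k, 2 ^ i * (y / 2 ^ (k - 1 - i) % 2) :=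
    Finset.dvd_sum fun i hi => dvd_mul_of_dvd_left (pow_dvd_pow 2 (Finset.mem_Ico.1 hi).1) _
  rw [hsplit, hsplit, Finset.sum_congr rfl fun i hi => by rw [hlow i hi]]
  exact Nat.ModEq.add_left _ ((Nat.modEq_zero_iff_dvd.2 (hhigh y₁)).trans
    (Nat.modEq_zero_iff_dvd.2 (hhigh y₂)).symm)

theorem ValidSeq.tail {k l : ℕ} {α : List ℕ} (h : ValidSeq k (l :: α)) : ValidSeq k α :=
  ⟨(List.pairwise_cons.1 h.1).2, fun m hm => h.2 m (List.mem_cons_of_mem l hm)⟩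

/-- `Y k α` is an interval of length `2 ^ logCardY k α`. For `α = 0 :: β` the truncated `0 - 1 = 0`
is the right value: level `0` selects the singleton `{min Y k β}`. -/
def logCardY (k : ℕ) : List ℕ → ℕ
  | [] => k
  | l :: _ => l - 1

theorem ValidSeq.le_logCardY {k l : ℕ} {α : List ℕ} (h : ValidSeq k (l :: α)) :
    l ≤ logCardY k α := by
  cases α with
  | nil => exact h.2 l List.mem_cons_self
  | cons l' β =>
    have := (List.pairwise_cons.1 h.1).1 l' List.mem_cons_self
    simp only [logCardY]
    omega

theorem Y_eq_Ico {k : ℕ} : ∀ {α : List ℕ}, ValidSeq k α →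
    ∃ a, 2 ^ logCardY k α ∣ a ∧ Y k α = Finset.Ico a (a + 2 ^ logCardY k α)
  | [], _ => ⟨0, dvd_zero _, by simp [Y, logCardY]⟩
  | l :: α, h => by
    obtain ⟨a, hdvd, hY⟩ := Y_eq_Ico h.tail
    have hl := h.le_logCardY
    have hsInf : sInf {z : ℕ | z ∈ Y k α} = a := by
      simp only [hY, Finset.mem_Ico]
      exact csInf_Ico (by simp)
    rw [Y, hsInf, hY, Nat.filter_clog_sub_add_one_Ico one_lt_two (by gcongr; omega)]
    cases l with
    | zero => exact ⟨a, one_dvd a, by simp [logCardY]⟩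
    | succ n =>
      simp only [logCardY, add_tsub_cancel_right, pow_succ, Nat.mul_div_cancel _ two_pos]
      refine ⟨a + 2 ^ n, dvd_add (dvd_trans (pow_dvd_pow 2 (by omega)) hdvd) dvd_rfl, ?_⟩
      rw [mul_two, add_assoc]

/-- `minStep(X^k_α) ≥ step^k_α`: any two distinct elements of `X^k_α` differ
by at least `step^k_α`. -/
theorem minStep_ge_step (k : ℕ) (α : List ℕ) (h : ValidSeq k α) :
    ∀ x ∈ X k α, ∀ y ∈ X k α, x < y → stepA k α ≤ y - x := by
  intro x hx y hy hxy
  obtain ⟨a, hdvd, hY⟩ := Y_eq_Ico h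
  obtain ⟨y₁, hy₁, rfl⟩ := Finset.mem_image.1 hx
  obtain ⟨y₂, hy₂, rfl⟩ := Finset.mem_image.1 hy
  rw [hY] at hy₁ hy₂
  cases α with
  | nil => simp only [stepA]; omega
  | cons l β =>
    obtain rfl | hl := Nat.eq_zero_or_pos l
    · simp only [logCardY, zero_tsub, pow_zero, Finset.mem_Ico] at hy₁ hy₂
      obtain rfl : y₁ = y₂ := by omega
      exact absurd hxy (lt_irrefl _)
    · have hlk : l ≤ k := h.2 l List.mem_cons_self
      have hmod := revBits_modEq_of_div_eq k
        ((Nat.div_eq_of_mem_Ico hdvd hy₁).trans (Nat.div_eq_of_mem_Ico hdvd hy₂).symm)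
      have hstep : stepA k (l :: β) = 2 ^ (k - logCardY k (l :: β)) := by
        simp only [stepA, logCardY]
        congr 1
        omega
      rw [hstep]
      exact Nat.le_of_dvd (Nat.sub_pos_of_lt hxy) ((Nat.modEq_iff_dvd' hxy.le).1 hmod)
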